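/- (Touching lemma) Let K : ℝ → ℝ be 2π-periodic, even, integrable over a period, and strictly decreasing on (0, π). Let w : ℝ → ℝ be 2π-periodic, continuous, odd with respect to λ, with w ≥ 0 on [λ, λ + π] and w not identically zero. Then (K ∗ w)(x̄) > 0 for every x̄ ∈ (λ, λ + π), where K ∗ w(x̄) = ∫_{λ−π}^{λ+π} K(x̄ − y) w(y) dy. -/
import Mathlib

open intervalIntegral

open MeasureTheory Set in
private lemma periodic_all_intervalIntegrable (K : ℝ → ℝ)
    (hKper : Function.Periodic K (2 * Real.pi))
    (hKint : MeasureTheory.IntegrableOn K (Set.Ioc (-Real.pi) Real.pi)) :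
    ∀ a b, IntervalIntegrable K MeasureTheory.volume a b := by
  have hπ := Real.pi_pos
  have h0 : IntervalIntegrable K volume (-Real.pi) Real.pi := by
    rw [intervalIntegrable_iff_integrableOn_Ioc_of_le (by linarith)]
    exact hKint
  have hshift : ∀ n : ℤ, IntervalIntegrable K volume
      (-Real.pi + n * (2 * Real.pi)) (Real.pi + n * (2 * Real.pi)) := by
    intro n
    have h1 := h0.comp_sub_right ((n : ℝ) * (2 * Real.pi))
    have h2 : (fun x => K (x - (n : ℝ) * (2 * Real.pi))) = K := by
      funext x
      exact hKper.sub_int_mul_eq n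
    rwa [h2] at h1
  have hchain : ∀ n : ℕ, IntervalIntegrable K volume
      (-Real.pi - n * (2 * Real.pi)) (Real.pi + n * (2 * Real.pi)) := by
    intro n
    induction n with
    | zero => simpa using h0
    | succ m ih =>
      have hl : IntervalIntegrable K volume
          (-Real.pi - ((m : ℝ) + 1) * (2 * Real.pi)) (-Real.pi - (m : ℝ) * (2 * Real.pi)) := by
        have h := hshift (-(m + 1) : ℤ)
        push_cast at h
        rw [show -Real.pi + -((m : ℝ) + 1) * (2 * Real.pi)
              = -Real.pi - ((m : ℝ) + 1) * (2 * Real.pi) by ring,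
            show Real.pi + -((m : ℝ) + 1) * (2 * Real.pi)
              = -Real.pi - (m : ℝ) * (2 * Real.pi) by ring] at h
        exact h
      have hr : IntervalIntegrable K volume
          (Real.pi + (m : ℝ) * (2 * Real.pi)) (Real.pi + ((m : ℝ) + 1) * (2 * Real.pi)) := by
        have h := hshift ((m + 1) : ℤ)
        push_cast at h
        rw [show -Real.pi + ((m : ℝ) + 1) * (2 * Real.pi)
              = Real.pi + (m : ℝ) * (2 * Real.pi) by ring] at h
        exact h
      have := (hl.trans ih).trans hr
      push_cast
      exact this
  intro a b
  obtain ⟨n, hn⟩ := exists_nat_ge ((|a| + |b|) / (2 * Real.pi))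
  have h2π : (0 : ℝ) < 2 * Real.pi := by linarith
  have hab : |a| + |b| ≤ (n : ℝ) * (2 * Real.pi) := by
    rw [div_le_iff₀ h2π] at hn
    exact hn
  have ha1 := neg_abs_le a
  have ha2 := le_abs_self a
  have hb1 := neg_abs_le b
  have hb2 := le_abs_self b
  have hb0 := abs_nonneg b
  have ha0 := abs_nonneg a
  apply (hchain n).mono_set
  apply Set.uIcc_subset_uIcc
  · rw [Set.mem_uIcc]
    left
    constructor <;> linarith
  · rw [Set.mem_uIcc]
    left
    constructor <;> linarith

private lemma aux_anti (K : ℝ → ℝ)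
    (hKper : Function.Periodic K (2 * Real.pi))
    (hKeven : ∀ x, K (-x) = K x)
    (hKanti : ∀ a b, 0 < a → a < b → b < Real.pi → K b < K a)
    {u t : ℝ} (hu0 : 0 < u) (huπ : u < Real.pi) (ht0 : 0 < t) (htπ : t < Real.pi)
    (hne : t ≠ u) (hsum : u + t ≠ Real.pi) : K (u + t) < K (u - t) := by
  have habs : K (u - t) = K |u - t| := by
    rcases le_total t u with h | h
    · rw [abs_of_nonneg (by linarith)]
    · rw [abs_of_nonpos (by linarith), ← hKeven (u - t)]
  have h0 : 0 < |u - t| := abs_pos.2 (sub_ne_zero.2 fun h => hne h.symm)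
  rcases lt_or_gt_of_ne hsum with h | h
  · rw [habs]
    exact hKanti _ _ h0 (abs_lt.2 ⟨by linarith, by linarith⟩) h
  · have hK2 : K (u + t) = K (2 * Real.pi - (u + t)) := by
      have e1 := hKper (u + t - 2 * Real.pi)
      rw [sub_add_cancel] at e1
      rw [e1, show u + t - 2 * Real.pi = -(2 * Real.pi - (u + t)) by ring, hKeven]
    rw [habs, hK2]
    exact hKanti _ _ h0 (abs_lt.2 ⟨by linarith, by linarith⟩) (by linarith)

open MeasureTheory in
theorem touching_lemma (K w : ℝ → ℝ)
    (hKper : Function.Periodic K (2 * Real.pi))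
    (hKeven : ∀ x, K (-x) = K x)
    (hKint : MeasureTheory.IntegrableOn K (Set.Ioc (-Real.pi) Real.pi))
    (hKanti : ∀ a b, 0 < a → a < b → b < Real.pi → K b < K a)
    (hwper : Function.Periodic w (2 * Real.pi))
    (hwcont : Continuous w)
    (lam : ℝ) (hodd : ∀ x, w (2 * lam - x) = -w x)
    (hwnonneg : ∀ x ∈ Set.Icc lam (lam + Real.pi), 0 ≤ w x)
    (hwne : ∃ x, w x ≠ 0) :
    ∀ xbar ∈ Set.Ioo lam (lam + Real.pi),
      0 < ∫ y in (lam - Real.pi)..(lam + Real.pi), K (xbar - y) * w y := by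
  intro xbar hx
  obtain ⟨hx1, hx2⟩ := hx
  have hπ := Real.pi_pos
  have hK' : ∀ a b, IntervalIntegrable K volume a b :=
    periodic_all_intervalIntegrable K hKper hKint
  -- integrability of the composed kernels
  have hKright : ∀ a b : ℝ, IntervalIntegrable (fun y => K (xbar - y)) volume a b := by
    intro a b
    have h := (hK' (xbar - a) (xbar - b)).comp_sub_left xbar
    simpa using h
  have hKplus : ∀ a b : ℝ, IntervalIntegrable (fun y => K (xbar + y - 2 * lam)) volume a b := by
    intro a b
    have h := (hK' (a + (xbar - 2 * lam)) (b + (xbar - 2 * lam))).comp_add_right (xbar - 2 * lam)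
    simp only [add_sub_cancel_right] at h
    have e : (fun y => K (xbar + y - 2 * lam)) = fun x => K (x + (xbar - 2 * lam)) := by
      funext y; ring_nf
    rw [e]
    exact h
  have hi1 : IntervalIntegrable (fun y => K (xbar - y) * w y) volume lam (lam + Real.pi) :=
    (hKright _ _).mul_continuousOn hwcont.continuousOn
  have hi0 : IntervalIntegrable (fun y => K (xbar - y) * w y) volume (lam - Real.pi) lam :=
    (hKright _ _).mul_continuousOn hwcont.continuousOn
  have hi2 : IntervalIntegrable (fun y => K (xbar + y - 2 * lam) * w y) volume lam
      (lam + Real.pi) :=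
    (hKplus _ _).mul_continuousOn hwcont.continuousOn
  have hif : IntervalIntegrable (fun y => (K (xbar - y) - K (xbar + y - 2 * lam)) * w y)
      volume lam (lam + Real.pi) := by
    have e : (fun y => (K (xbar - y) - K (xbar + y - 2 * lam)) * w y)
        = fun y => K (xbar - y) * w y - K (xbar + y - 2 * lam) * w y := by
      funext y; ring
    rw [e]
    exact hi1.sub hi2
  -- reflection identity
  have hrefl : (∫ y in (lam - Real.pi)..lam, K (xbar - y) * w y)
      = ∫ y in lam..(lam + Real.pi), -(K (xbar + y - 2 * lam) * w y) := by
    have h := intervalIntegral.integral_comp_sub_left (a := lam) (b := lam + Real.pi)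
      (fun y => K (xbar - y) * w y) (2 * lam)
    rw [show 2 * lam - (lam + Real.pi) = lam - Real.pi by ring,
        show 2 * lam - lam = lam by ring] at h
    rw [← h]
    apply intervalIntegral.integral_congr
    intro y _
    simp only
    rw [hodd y, show xbar - (2 * lam - y) = xbar + y - 2 * lam by ring]
    ring
  -- total rewrite
  have htot : (∫ y in (lam - Real.pi)..(lam + Real.pi), K (xbar - y) * w y)
      = ∫ y in lam..(lam + Real.pi), (K (xbar - y) - K (xbar + y - 2 * lam)) * w y := by
    rw [← intervalIntegral.integral_add_adjacent_intervals hi0 hi1, hrefl,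
        intervalIntegral.integral_neg]
    rw [show (∫ y in lam..(lam + Real.pi), (K (xbar - y) - K (xbar + y - 2 * lam)) * w y)
        = ∫ y in lam..(lam + Real.pi),
            (K (xbar - y) * w y - K (xbar + y - 2 * lam) * w y) from
      intervalIntegral.integral_congr fun y _ => by ring]
    rw [intervalIntegral.integral_sub hi1 hi2]
    ring
  rw [htot, intervalIntegral.integral_of_le (by linarith)]
  -- the key pointwise strict inequality
  have hbr : ∀ y : ℝ, lam < y → y < lam + Real.pi → y ≠ xbar →
      y ≠ 2 * lam + Real.pi - xbar → K (xbar + y - 2 * lam) < K (xbar - y) := by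
    intro y h1 h2 h3 h4
    have := aux_anti K hKper hKeven hKanti
      (u := xbar - lam) (t := y - lam)
      (by linarith) (by linarith) (by linarith) (by linarith)
      (fun h => h3 (by linarith [sub_left_inj.1 h]))
      (fun h => h4 (by linarith))
    rw [show xbar - lam + (y - lam) = xbar + y - 2 * lam by ring,
        show xbar - lam - (y - lam) = xbar - y by ring] at this
    exact this
  -- measure-zero exceptional set
  have hS0 : volume ({xbar, 2 * lam + Real.pi - xbar} : Set ℝ) = 0 := by
    apply Set.Countable.measure_zero
    exact (Set.countable_singleton _).insert _
  apply (MeasureTheory.setIntegral_pos_iff_support_of_nonneg_ae ?_ ?_).2 ?_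
  · -- a.e. nonnegativity
    have h1 : ∀ᵐ y ∂volume, y ∉ ({xbar, 2 * lam + Real.pi - xbar} : Set ℝ) :=
      measure_eq_zero_iff_ae_notMem.1 hS0
    have h2 := ae_restrict_of_ae (s := Set.Ioc lam (lam + Real.pi)) h1
    have h3 : ∀ᵐ y ∂volume.restrict (Set.Ioc lam (lam + Real.pi)),
        y ∈ Set.Ioc lam (lam + Real.pi) := ae_restrict_mem measurableSet_Ioc
    filter_upwards [h2, h3] with y hyS hyI
    show (0 : ℝ) ≤ (K (xbar - y) - K (xbar + y - 2 * lam)) * w y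
    have hw0 : 0 ≤ w y := hwnonneg y ⟨hyI.1.le, hyI.2⟩
    rcases eq_or_lt_of_le hyI.2 with heq | hlt
    · have e : xbar + (lam + Real.pi) - 2 * lam = xbar - (lam + Real.pi) + 2 * Real.pi := by
        ring
      rw [heq, e, hKper, sub_self, zero_mul]
    · simp only [Set.mem_insert_iff, Set.mem_singleton_iff, not_or] at hyS
      exact mul_nonneg (sub_pos.2 (hbr y hyI.1 hlt hyS.1 hyS.2)).le hw0
  · -- integrability
    exact (intervalIntegrable_iff_integrableOn_Ioc_of_le (by linarith)).1 hif
  · -- positive measure of the support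
    have hwlam : w lam = 0 := by
      have h := hodd lam
      rw [show 2 * lam - lam = lam by ring] at h
      linarith
    have hwlampi : w (lam + Real.pi) = 0 := by
      have h1 := hodd (lam + Real.pi)
      rw [show 2 * lam - (lam + Real.pi) = lam - Real.pi by ring] at h1
      have h2 := hwper (lam - Real.pi)
      rw [show lam - Real.pi + 2 * Real.pi = lam + Real.pi by ring] at h2
      linarith
    obtain ⟨x0, hx0⟩ := hwne
    obtain ⟨y, hyI, hyeq⟩ := hwper.exists_mem_Ico (by linarith) x0 (lam - Real.pi)
    have hy2 : y < lam + Real.pi := by have := hyI.2; linarith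
    have hwy : w y ≠ 0 := fun h => hx0 (hyeq.trans h)
    obtain ⟨y0, hy0I, hy0pos⟩ : ∃ y0 ∈ Set.Ioo lam (lam + Real.pi), 0 < w y0 := by
      rcases lt_or_ge y lam with h | h
      · have hy1 : lam - Real.pi < y := by
          rcases lt_or_eq_of_le hyI.1 with hh | hh
          · exact hh
          · exfalso
            apply hwy
            rw [← hh]
            have h2 := hwper (lam - Real.pi)
            rw [show lam - Real.pi + 2 * Real.pi = lam + Real.pi by ring] at h2
            linarith
        have hmem : 2 * lam - y ∈ Set.Icc lam (lam + Real.pi) :=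
          ⟨by linarith, by linarith⟩
        have hge := hwnonneg _ hmem
        have heq2 : w (2 * lam - y) = -w y := hodd y
        refine ⟨2 * lam - y, ⟨by linarith, by linarith⟩, ?_⟩
        rcases hwy.lt_or_gt with hneg | hpos
        · rw [heq2]; linarith
        · exfalso; rw [heq2] at hge; linarith
      · have hyne : y ≠ lam := fun hh => hwy (hh ▸ hwlam)
        refine ⟨y, ⟨lt_of_le_of_ne h (Ne.symm hyne), hy2⟩, ?_⟩
        exact (hwnonneg y ⟨h, hy2.le⟩).lt_of_ne (Ne.symm hwy)
    have hopen : IsOpen {y : ℝ | 0 < w y} := isOpen_lt continuous_const hwcont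
    obtain ⟨ε, hε, hball⟩ := Metric.isOpen_iff.1 hopen y0 hy0pos
    set c := max lam (y0 - ε) with hc
    set d := min (lam + Real.pi) (y0 + ε) with hd
    have hcy0 : c < y0 := max_lt hy0I.1 (by linarith)
    have hy0d : y0 < d := lt_min hy0I.2 (by linarith)
    have hcd : c < d := hcy0.trans hy0d
    have hIoo : ∀ y ∈ Set.Ioo c d, 0 < w y ∧ lam < y ∧ y < lam + Real.pi := by
      intro y hy
      obtain ⟨hyc, hyd⟩ := hy
      have h1 : lam < y := lt_of_le_of_lt (le_max_left _ _) hyc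
      have h2 : y < lam + Real.pi := lt_of_lt_of_le hyd (min_le_left _ _)
      have h3 : y0 - ε < y := lt_of_le_of_lt (le_max_right _ _) hyc
      have h4 : y < y0 + ε := lt_of_lt_of_le hyd (min_le_right _ _)
      have : y ∈ Metric.ball y0 ε := by
        rw [Metric.mem_ball, Real.dist_eq, abs_lt]
        constructor <;> linarith
      exact ⟨hball this, h1, h2⟩
    have hsub : Set.Ioo c d \ ({xbar, 2 * lam + Real.pi - xbar} : Set ℝ) ⊆
        Function.support (fun y => (K (xbar - y) - K (xbar + y - 2 * lam)) * w y) ∩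
          Set.Ioc lam (lam + Real.pi) := by
      rintro y ⟨hy, hyS⟩
      obtain ⟨hwpos, h1, h2⟩ := hIoo y hy
      simp only [Set.mem_insert_iff, Set.mem_singleton_iff, not_or] at hyS
      constructor
      · exact ne_of_gt (mul_pos (sub_pos.2 (hbr y h1 h2 hyS.1 hyS.2)) hwpos)
      · exact ⟨h1, h2.le⟩
    have hmeas : volume (Set.Ioo c d \ ({xbar, 2 * lam + Real.pi - xbar} : Set ℝ))
        = volume (Set.Ioo c d) := measure_diff_null hS0
    have hpos : (0 : ENNReal) < volume (Set.Ioo c d) := by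
      rw [Real.volume_Ioo]
      exact ENNReal.ofReal_pos.2 (by linarith)
    calc (0 : ENNReal) < volume (Set.Ioo c d \ ({xbar, 2 * lam + Real.pi - xbar} : Set ℝ)) := by
          rw [hmeas]; exact hpos
      _ ≤ _ := measure_mono hsub
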